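/- For fixed-length codebooks of M equiprobable codewords of length l with cost eta(C) = n_0(C) + 2*n_1(C) and rate R_l = M*log2(M)/eta(C_l) for the optimal codebook C_l at level l, the optimal level l* lies in the range ceil(log2 M) <= l* <= 2*ceil(log2 M). -/

import Mathlib

/-- Cost of a codeword: number of zeros plus twice the number of ones. -/
def eta (x : List Bool) : ℕ := x.count false + 2 * x.count true

def codebookCost (C : Finset (List Bool)) : ℕ := ∑ x ∈ C, eta x

/-- Minimal total cost of a codebook of `M` codewords of length `l`. -/
noncomputable def optCost (M l : ℕ) : ℕ :=
  sInf {n | ∃ C : Finset (List Bool),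
    (∀ x ∈ C, x.length = l) ∧ C.card = M ∧ codebookCost C = n}

/-- Rate of the optimal fixed-length codebook at level `l`. -/
noncomputable def rateAt (M l : ℕ) : ℝ := M * Real.logb 2 M / optCost M l

lemma count_false_add_count_true (x : List Bool) :
    x.count false + x.count true = x.length := by
  induction x with
  | nil => simp
  | cons a t ih => cases a <;> simp [List.count_cons] <;> omega

lemma length_le_eta (x : List Bool) : x.length ≤ eta x := by
  have := count_false_add_count_true x
  unfold eta; omega

lemma eta_le_two_length (x : List Bool) : eta x ≤ 2 * x.length := by
  have := count_false_add_count_true x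
  unfold eta; omega

lemma exists_codebook (M l : ℕ) (h : M ≤ 2 ^ l) :
    ∃ C : Finset (List Bool), (∀ x ∈ C, x.length = l) ∧ C.card = M := by
  have hcard : (Finset.univ.image (fun f : Fin l → Bool => List.ofFn f)).card = 2 ^ l := by
    rw [Finset.card_image_of_injective _ List.ofFn_injective]
    simp
  obtain ⟨C, hsub, hc⟩ := Finset.exists_subset_card_eq (s := Finset.univ.image (fun f : Fin l → Bool => List.ofFn f)) (n := M) (by rw [hcard]; exact h)
  refine ⟨C, ?_, hc⟩
  intro x hx
  obtain ⟨f, _, rfl⟩ := Finset.mem_image.mp (hsub hx)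
  simp

lemma optCost_lower (M l : ℕ) (h : M ≤ 2 ^ l) : M * l ≤ optCost M l := by
  have hne : {n | ∃ C : Finset (List Bool),
      (∀ x ∈ C, x.length = l) ∧ C.card = M ∧ codebookCost C = n}.Nonempty := by
    obtain ⟨C, h1, h2⟩ := exists_codebook M l h
    exact ⟨codebookCost C, C, h1, h2, rfl⟩
  obtain ⟨C, h1, h2, h3⟩ := Nat.sInf_mem hne
  rw [optCost, ← h3, codebookCost, ← h2]
  calc C.card * l = ∑ x ∈ C, l := by rw [Finset.sum_const, smul_eq_mul]
    _ ≤ ∑ x ∈ C, eta x := Finset.sum_le_sum fun x hx => by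
        rw [← h1 x hx]; exact length_le_eta x

lemma optCost_upper (M l : ℕ) (h : M ≤ 2 ^ l) : optCost M l ≤ 2 * (M * l) := by
  obtain ⟨C, h1, h2⟩ := exists_codebook M l h
  have : codebookCost C ≤ 2 * (M * l) := by
    rw [codebookCost, ← h2]
    calc ∑ x ∈ C, eta x ≤ ∑ x ∈ C, 2 * l := Finset.sum_le_sum fun x hx => by
          have := eta_le_two_length x; rw [h1 x hx] at this; exact this
      _ = 2 * (C.card * l) := by rw [Finset.sum_const, smul_eq_mul]; ring
  exact le_trans (Nat.sInf_le ⟨C, h1, h2, rfl⟩) this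

/-- The optimal level `l*` lies between `⌈log₂ M⌉` and `2⌈log₂ M⌉`. -/
theorem stmt_12 (M : ℕ) (hM : 2 ≤ M) :
    ∃ lstar : ℕ, Nat.clog 2 M ≤ lstar ∧ lstar ≤ 2 * Nat.clog 2 M ∧
      ∀ l : ℕ, M ≤ 2 ^ l → rateAt M l ≤ rateAt M lstar := by
  set c := Nat.clog 2 M with hc
  have hc1 : 1 ≤ c := Nat.clog_pos (by norm_num) (by omega)
  have hMc : M ≤ 2 ^ c := Nat.le_pow_clog (by norm_num) M
  have hnum : (0:ℝ) ≤ M * Real.logb 2 M := by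
    apply mul_nonneg (by positivity)
    exact Real.logb_nonneg (by norm_num) (by exact_mod_cast hM.trans' (by norm_num))
  obtain ⟨lstar, hmem, hmax⟩ := Finset.exists_max_image (Finset.Icc c (2*c)) (rateAt M)
    ⟨c, by simp; omega⟩
  rw [Finset.mem_Icc] at hmem
  refine ⟨lstar, hmem.1, hmem.2, ?_⟩
  intro l hl
  have hcl : c ≤ l := (Nat.clog_le_iff_le_pow (by norm_num)).mpr hl
  by_cases hl2 : l ≤ 2 * c
  · exact hmax l (Finset.mem_Icc.mpr ⟨hcl, hl2⟩)
  · -- l > 2c : rateAt l ≤ rateAt c ≤ rateAt lstar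
    have hclt : optCost M c ≤ optCost M l := by
      calc optCost M c ≤ 2 * (M * c) := optCost_upper M c hMc
        _ = M * (2 * c) := by ring
        _ ≤ M * l := Nat.mul_le_mul_left M (by omega)
        _ ≤ optCost M l := optCost_lower M l hl
    have hcpos : 0 < optCost M c := lt_of_lt_of_le (by positivity) (optCost_lower M c hMc)
    have h1 : rateAt M l ≤ rateAt M c := by
      unfold rateAt
      apply div_le_div_of_nonneg_left hnum (by exact_mod_cast hcpos)
      exact_mod_cast hclt
    exact h1.trans (hmax c (Finset.mem_Icc.mpr ⟨le_refl c, by omega⟩))
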